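/- Let TA = (L, L₀, L_u, Σ, CX, I, E) be a timed automaton and define g on states by g((l,ν)) = (l_u, ν) if ν = ν₀ and ν₀ ⊭ I(l), and g((l,ν)) = (l,ν) otherwise. Then for all states (l,ν), (l',ν') and every label α ∈ Σ ∪ ℝ≥0: (l,ν) →α (l',ν') in TS(TA) if and only if g((l,ν)) →α g((l',ν')) in TS(PUR(TA)). -/

import Mathlib

/-!
Framework for timed automata.  Clock valuations assign non-negative reals to
clocks.  Guards and location invariants are represented semantically, as
predicates on clock valuations.
-/

/-- Clock valuations: each clock gets a non-negative real. -/
abbrev Val (C : Type) := C → NNReal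

/-- The valuation `ν₀` assigning `0` to every clock. -/
def zeroVal {C : Type} : Val C := fun _ => 0

open Classical in
/-- `ν[λ := 0]`: reset the clocks in `lam` to zero. -/
noncomputable def resetVal {C : Type} (ν : Val C) (lam : Set C) : Val C :=
  fun x => if x ∈ lam then 0 else ν x

/-- `ν + δ`: advance every clock by `δ`. -/
def shift {C : Type} (ν : Val C) (δ : NNReal) : Val C := fun x => ν x + δ

/-- A timed automaton `TA = (L, L₀, L_u, Σ, CX, I, E)` with location type `L`,
action alphabet `A` and clock type `C`:  a set of initial locations (nonempty),
a set of urgent locations, an invariant map, and a set of edges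
`(l, a, φ, λ, l')` consisting of source, action, guard, reset set and target. -/
structure TA (L A C : Type) where
  init : Set L
  init_nonempty : init.Nonempty
  urgent : Set L
  inv : L → Val C → Prop
  edges : Set (L × A × (Val C → Prop) × Set C × L)

/-- States of the associated transition systems: location/valuation pairs. -/
abbrev State (L C : Type) := L × Val C

/-- Initial states: initial locations paired with the zero valuation. -/
def TA.initStates {L A C : Type} (T : TA L A C) : Set (State L C) :=
  {p | p.1 ∈ T.init ∧ p.2 = zeroVal}

/-- Baseline semantics `TS(TA)`.  Labels are `Sum.inl a` for actions `a ∈ Σ`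
and `Sum.inr δ` for delays `δ ∈ ℝ≥0`.  Action transitions require the target
invariant to hold; delay transitions require the source location not to be
urgent and the invariant to hold throughout the delay. -/
def TS {L A C : Type} (T : TA L A C) :
    State L C → (A ⊕ NNReal) → State L C → Prop := fun p α q =>
  match α with
  | Sum.inl a => ∃ φ lam, (p.1, a, φ, lam, q.1) ∈ T.edges ∧ φ p.2 ∧
      q.2 = resetVal p.2 lam ∧ T.inv q.1 q.2
  | Sum.inr δ => p.1 ∉ T.urgent ∧ q.1 = p.1 ∧ q.2 = shift p.2 δ ∧
      ∀ k ≤ δ, T.inv p.1 (shift p.2 k)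

/-- Unsatisfied-invariants semantics `TS'(TA)`: like `TS(TA)` except action
transitions do not require the target invariant to hold. -/
def TS' {L A C : Type} (T : TA L A C) :
    State L C → (A ⊕ NNReal) → State L C → Prop := fun p α q =>
  match α with
  | Sum.inl a => ∃ φ lam, (p.1, a, φ, lam, q.1) ∈ T.edges ∧ φ p.2 ∧
      q.2 = resetVal p.2 lam
  | Sum.inr δ => p.1 ∉ T.urgent ∧ q.1 = p.1 ∧ q.2 = shift p.2 δ ∧
      ∀ k ≤ δ, T.inv p.1 (shift p.2 k)

/-- Reachable states: smallest set containing the initial states and closed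
under the transition relation. -/
inductive Reachable {S Λ : Type} (init : Set S) (tr : S → Λ → S → Prop) : S → Prop
  | base {s : S} : s ∈ init → Reachable init tr s
  | step {s : S} {α : Λ} {s' : S} :
      Reachable init tr s → tr s α s' → Reachable init tr s'

/-- The construction `PUR(TA)`.  Locations are `L ⊕ L`: `Sum.inl l` is the
original location `l`, and `Sum.inr l` for `l ∈ L_B = {l ∈ L₀ | ν₀ ⊭ I(l)}`
plays the role of the fresh urgent copy `l_u ∈ F_u`.  Initial locations are
`(L₀ - L_B) ∪ F_u`, urgent locations are `L_u ∪ F_u`, the invariant of each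
fresh copy is `true`, and the edges are the original ones together with copies
`(l_u, a, φ, λ, l'')` of each edge `(l, a, φ, λ, l'')` with `l ∈ L_B`. -/
noncomputable def PUR {L A C : Type} (T : TA L A C) : TA (L ⊕ L) A C where
  init := Sum.inl '' {l | l ∈ T.init ∧ T.inv l zeroVal} ∪
          Sum.inr '' {l | l ∈ T.init ∧ ¬ T.inv l zeroVal}
  init_nonempty := by
    obtain ⟨l, hl⟩ := T.init_nonempty
    by_cases h : T.inv l zeroVal
    · exact ⟨Sum.inl l, Set.mem_union_left _ (Set.mem_image_of_mem _ ⟨hl, h⟩)⟩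
    · exact ⟨Sum.inr l, Set.mem_union_right _ (Set.mem_image_of_mem _ ⟨hl, h⟩)⟩
  urgent := Sum.inl '' T.urgent ∪ Sum.inr '' {l | l ∈ T.init ∧ ¬ T.inv l zeroVal}
  inv := fun l' ν =>
    match l' with
    | Sum.inl l => T.inv l ν
    | Sum.inr _ => True
  edges := { e | ∃ l a φ lam l', (l, a, φ, lam, l') ∈ T.edges ∧
      (e = (Sum.inl l, a, φ, lam, Sum.inl l') ∨
       (l ∈ T.init ∧ ¬ T.inv l zeroVal ∧ e = (Sum.inr l, a, φ, lam, Sum.inl l'))) }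

open Classical in
/-- The map `g` on states: `g((l,ν)) = (l_u, ν)` if `ν = ν₀` and `ν₀ ⊭ I(l)`
(where `l_u ∈ F_u` is the fresh copy of `l`, which exists since then
`l ∈ L_B ⊆ L₀`), and `g((l,ν)) = (l,ν)` otherwise. -/
noncomputable def gPUR {L A C : Type} (T : TA L A C) :
    State L C → State (L ⊕ L) C := fun p =>
  if p.1 ∈ T.init ∧ p.2 = zeroVal ∧ ¬ T.inv p.1 zeroVal
  then (Sum.inr p.1, p.2) else (Sum.inl p.1, p.2)

/-!
`g` moves only the states `(l, ν₀)` with `l ∈ L_B`. No transition of `TS(TA)` enters such a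
state, since every target satisfies its invariant, and none leaves it by a delay, since the
invariant already fails at delay `0`. Correspondingly, the fresh copy `l_u` is urgent, no edge of
`PUR(TA)` enters it, and it carries exactly the action edges of `l`. On all other states
`PUR(TA)` agrees with `TA`.
-/

theorem shift_zero {C : Type} (ν : Val C) : shift ν 0 = ν :=
  funext fun _ => add_zero _

namespace TA

variable {L A C : Type} (T : TA L A C)

/-- The set `L_B`. -/
def initBlocked : Set L := {l | l ∈ T.init ∧ ¬ T.inv l zeroVal}

variable {T}

theorem inv_of_TS {p q : State L C} {α : A ⊕ NNReal} (h : TS T p α q) :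
    T.inv q.1 q.2 := by
  rcases α with a | δ
  · obtain ⟨-, -, -, -, -, hinv⟩ := h
    exact hinv
  · obtain ⟨-, hl, hν, hinv⟩ := h
    simpa only [hl, hν] using hinv δ le_rfl

theorem not_TS_delay_of_not_inv {l l' : L} {ν ν' : Val C} {δ : NNReal}
    (hl : ¬ T.inv l ν) : ¬ TS T (l, ν) (Sum.inr δ) (l', ν') :=
  fun h => hl (shift_zero ν ▸ h.2.2.2 0 zero_le)

theorem gPUR_cases (l : L) (ν : Val C) :
    gPUR T (l, ν) = (Sum.inl l, ν) ∨
      l ∈ T.initBlocked ∧ ν = zeroVal ∧ gPUR T (l, ν) = (Sum.inr l, ν) := by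
  unfold gPUR
  split_ifs with h
  · exact Or.inr ⟨⟨h.1, h.2.2⟩, h.2.1, rfl⟩
  · exact Or.inl rfl

theorem inl_mem_PUR_urgent_iff {l : L} : Sum.inl l ∈ (PUR T).urgent ↔ l ∈ T.urgent := by
  simp [PUR]

theorem inr_mem_PUR_urgent {l : L} (hl : l ∈ T.initBlocked) :
    Sum.inr l ∈ (PUR T).urgent :=
  Or.inr ⟨l, hl, rfl⟩

theorem mem_PUR_edges_inl_inl_iff {l l' : L} {a : A} {φ : Val C → Prop} {lam : Set C} :
    (Sum.inl l, a, φ, lam, Sum.inl l') ∈ (PUR T).edges ↔ (l, a, φ, lam, l') ∈ T.edges := by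
  simp [PUR]

theorem mem_PUR_edges_inr_inl_iff {l l' : L} {a : A} {φ : Val C → Prop} {lam : Set C}
    (hl : l ∈ T.initBlocked) :
    (Sum.inr l, a, φ, lam, Sum.inl l') ∈ (PUR T).edges ↔ (l, a, φ, lam, l') ∈ T.edges := by
  have hl' : l ∈ T.init ∧ ¬ T.inv l zeroVal := hl
  simp [PUR, hl']

theorem not_mem_PUR_edges_inr {s : L ⊕ L} {l' : L} {a : A} {φ : Val C → Prop}
    {lam : Set C} : (s, a, φ, lam, Sum.inr l') ∉ (PUR T).edges := by
  simp [PUR]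

theorem TS_PUR_inl_inl_iff {l l' : L} {ν ν' : Val C} {α : A ⊕ NNReal} :
    TS (PUR T) (Sum.inl l, ν) α (Sum.inl l', ν') ↔ TS T (l, ν) α (l', ν') := by
  rcases α with a | δ
  · simp only [TS, mem_PUR_edges_inl_inl_iff]
    rfl
  · simp only [TS, inl_mem_PUR_urgent_iff, Sum.inl.injEq]
    rfl

theorem TS_PUR_inr_inl_iff {l l' : L} {ν' : Val C} {α : A ⊕ NNReal}
    (hl : l ∈ T.initBlocked) :
    TS (PUR T) (Sum.inr l, zeroVal) α (Sum.inl l', ν') ↔ TS T (l, zeroVal) α (l', ν') := by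
  rcases α with a | δ
  · simp only [TS, mem_PUR_edges_inr_inl_iff hl]
    rfl
  · exact iff_of_false (fun h => h.1 (inr_mem_PUR_urgent hl)) (not_TS_delay_of_not_inv hl.2)

theorem not_TS_PUR_to_inr {p : State (L ⊕ L) C} {l' : L} {ν' : Val C} {α : A ⊕ NNReal}
    (hl' : l' ∈ T.initBlocked) : ¬ TS (PUR T) p α (Sum.inr l', ν') := by
  rcases α with a | δ
  · rintro ⟨φ, lam, he, -⟩
    exact not_mem_PUR_edges_inr he
  · rintro ⟨hu, hl, -⟩
    exact hu (hl ▸ inr_mem_PUR_urgent hl')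

end TA

open TA

theorem statement_15_general {L A C : Type}
    (T : TA L A C) :
    ∀ (l l' : L) (ν ν' : Val C) (α : A ⊕ NNReal),
      TS T (l, ν) α (l', ν') ↔ TS (PUR T) (gPUR T (l, ν)) α (gPUR T (l', ν')) := by
  intro l l' ν ν' α
  rcases gPUR_cases l' ν' with htgt | ⟨hl', rfl, htgt⟩
  · rw [htgt]
    rcases gPUR_cases l ν with hsrc | ⟨hl, rfl, hsrc⟩
    · rw [hsrc, TS_PUR_inl_inl_iff]
    · rw [hsrc, TS_PUR_inr_inl_iff hl]
  · rw [htgt]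
    exact iff_of_false (fun h => hl'.2 (inv_of_TS h)) (not_TS_PUR_to_inr hl')

/-- for all states and every label `α ∈ Σ ∪ ℝ≥0`,
`(l,ν) →α (l',ν')` in `TS(TA)` iff `g((l,ν)) →α g((l',ν'))` in
`TS(PUR(TA))`. -/
theorem statement_15 {L A C : Type} [Fintype L] [Fintype A] [Fintype C] [Nonempty C]
    (T : TA L A C) :
    ∀ (l l' : L) (ν ν' : Val C) (α : A ⊕ NNReal),
      TS T (l, ν) α (l', ν') ↔ TS (PUR T) (gPUR T (l, ν)) α (gPUR T (l', ν')) :=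
  statement_15_general T
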